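/- Let β > 1, K > 0, and let g : [0,T] → [0,∞) be continuous, left-differentiable on (0,T], with left derivative satisfying d⁻g/dt (t) ≤ -K g(t)^β for all t ∈ (0,T]. Then for all t ∈ [0,T], g(t) ≤ (g(0)^{-(β-1)} + K(β-1)t)^{-1/(β-1)}. -/

import Mathlib

open Real Set

/-! Wherever `g` lies above the explicit solution `B t = (g 0 ^ (1 - β) + K (β - 1) t) ^ (-1 / (β - 1))`
of `B' = -K B ^ β`, the monotonicity of `u ↦ u ^ β` gives `g' ≤ -K g ^ β ≤ -K B ^ β = B'`.
A comparison principle for left derivatives then keeps `g` below `B`, since they agree at `0`. -/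

theorem image_right_le_image_left_of_deriv_left_nonpos {f f' : ℝ → ℝ} {a b : ℝ} (hab : a ≤ b)
    (hf : ContinuousOn f (Icc a b)) (hf' : ∀ x ∈ Ioc a b, HasDerivWithinAt f (f' x) (Iic x) x)
    (hf'_nonpos : ∀ x ∈ Ioc a b, f' x ≤ 0) : f b ≤ f a := by
  -- Reverse time and apply the right-derivative comparison with the constant `f b`.
  set σ : ℝ → ℝ := fun s => a + b - s
  have hσ : MapsTo σ (Icc a b) (Icc a b) := fun s hs => ⟨by grind, by grind⟩
  have hreversed : ∀ s ∈ Ico a b, HasDerivWithinAt (f ∘ σ) (-f' (σ s)) (Ici s) s := by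
    intro s hs
    have hσs : σ s ∈ Ioc a b := ⟨by grind, by grind⟩
    have hσ' : HasDerivWithinAt σ (-1) (Ici s) s := by
      simpa using ((hasDerivAt_id s).const_sub (a + b)).hasDerivWithinAt
    simpa using (hf' _ hσs).comp s hσ' fun y (hy : s ≤ y) => show σ y ≤ σ s by grind
  have key := image_le_of_deriv_right_le_deriv_boundary (f := fun _ => f b) (f' := fun _ => 0)
    continuousOn_const (fun x _ => hasDerivWithinAt_const x _ _) (by simp [σ])
    (hf.comp (by fun_prop) hσ) hreversed
    (fun s hs => neg_nonneg.mpr (hf'_nonpos _ ⟨by grind, by grind⟩))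
  simpa [σ] using key (right_mem_Icc.mpr hab)

theorem image_le_of_deriv_left_le_deriv_boundary {f f' B B' : ℝ → ℝ} {a b : ℝ}
    (hf : ContinuousOn f (Icc a b)) (hf' : ∀ x ∈ Ioc a b, HasDerivWithinAt f (f' x) (Iic x) x)
    (ha : f a ≤ B a) (hB : ContinuousOn B (Icc a b))
    (hB' : ∀ x ∈ Ioc a b, HasDerivWithinAt B (B' x) (Iic x) x)
    (bound : ∀ x ∈ Ioc a b, B x < f x → f' x ≤ B' x) : ∀ x ∈ Icc a b, f x ≤ B x := by
  by_contra! ⟨t₁, ht₁, hlt⟩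
  -- `t` is the last time before `t₁` at which `f ≤ B`.
  set A := Icc a t₁ ∩ {x | f x - B x ≤ 0}
  have hsub : Icc a t₁ ⊆ Icc a b := Icc_subset_Icc_right ht₁.2
  have hcont : ContinuousOn (fun x => f x - B x) (Icc a t₁) := (hf.sub hB).mono hsub
  have hA : IsClosed A :=
    hcont.preimage_isClosed_of_isClosed isClosed_Icc isClosed_Iic
  have hAbdd : BddAbove A := ⟨t₁, fun x hx => hx.1.2⟩
  have haA : a ∈ A := ⟨left_mem_Icc.mpr ht₁.1, by simpa using ha⟩
  set t := sSup A
  have htA : t ∈ A := hA.csSup_mem ⟨a, haA⟩ hAbdd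
  have hat : a ≤ t := le_csSup hAbdd haA
  have htt₁ : t ≤ t₁ := htA.1.2
  have habove : ∀ x ∈ Ioc t t₁, B x < f x := fun x hx => by
    by_contra! hle
    exact (le_csSup hAbdd ⟨⟨hat.trans hx.1.le, hx.2⟩, by simpa using hle⟩).not_gt hx.1
  have hIoc : Ioc t t₁ ⊆ Ioc a b := Ioc_subset_Ioc hat ht₁.2
  have hdecr := image_right_le_image_left_of_deriv_left_nonpos htt₁
    (hcont.mono (Icc_subset_Icc_left hat))
    (fun x hx => (hf' x (hIoc hx)).sub (hB' x (hIoc hx)))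
    (fun x hx => sub_nonpos.mpr (bound x (hIoc hx) (habove x hx)))
  have htle : f t - B t ≤ 0 := htA.2
  linarith

theorem hasDerivAt_add_mul_rpow_neg_inv {β K c t : ℝ} (hβ : β ≠ 1)
    (ht : 0 < c + K * (β - 1) * t) :
    HasDerivAt (fun s => (c + K * (β - 1) * s) ^ (-(1 / (β - 1))))
      (-K * ((c + K * (β - 1) * t) ^ (-(1 / (β - 1)))) ^ β) t := by
  have hβ1 : β - 1 ≠ 0 := sub_ne_zero.mpr hβ
  have hlin : HasDerivAt (fun s => c + K * (β - 1) * s) (K * (β - 1)) t := by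
    simpa using ((hasDerivAt_id t).const_mul (K * (β - 1))).const_add c
  convert hlin.rpow_const (p := -(1 / (β - 1))) (Or.inl ht.ne') using 1
  rw [← rpow_mul ht.le, show -(1 / (β - 1)) * β = -(1 / (β - 1)) - 1 by field_simp; ring]
  field_simp

theorem stmt_10_general (β K T : ℝ) (hβ : 1 < β) (hK : 0 < K)
    (g g' : ℝ → ℝ)
    (hcont : ContinuousOn g (Icc 0 T))
    (hg0 : 0 < g 0)
    (hderiv : ∀ t ∈ Ioc (0:ℝ) T, HasDerivWithinAt g (g' t) (Iic t) t)
    (hdissip : ∀ t ∈ Ioc (0:ℝ) T, g' t ≤ -K * g t ^ β) :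
    ∀ t ∈ Icc (0:ℝ) T,
      g t ≤ (g 0 ^ (-(β - 1)) + K * (β - 1) * t) ^ (-(1 / (β - 1))) := by
  set B : ℝ → ℝ := fun t => (g 0 ^ (-(β - 1)) + K * (β - 1) * t) ^ (-(1 / (β - 1)))
  have hbase : ∀ t, 0 ≤ t → 0 < g 0 ^ (-(β - 1)) + K * (β - 1) * t := fun t ht => by
    have := rpow_pos_of_pos hg0 (-(β - 1))
    have := mul_nonneg (mul_pos hK (sub_pos.mpr hβ)).le ht
    linarith
  have hB' : ∀ t, 0 ≤ t → HasDerivAt B (-K * B t ^ β) t := fun t ht =>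
    hasDerivAt_add_mul_rpow_neg_inv hβ.ne' (hbase t ht)
  have hB0 : g 0 ≤ B 0 := by
    simp only [B, mul_zero, add_zero, ← rpow_mul hg0.le]
    rw [show -(β - 1) * -(1 / (β - 1)) = 1 by field_simp [(sub_pos.mpr hβ).ne'], rpow_one]
  refine image_le_of_deriv_left_le_deriv_boundary hcont hderiv hB0
    (fun t ht => (hB' t ht.1).continuousAt.continuousWithinAt)
    (fun t ht => (hB' t ht.1.le).hasDerivWithinAt) fun t ht hlt => ?_
  have hBpos : 0 < B t := rpow_pos_of_pos (hbase t ht.1.le) _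
  calc g' t ≤ -K * g t ^ β := hdissip t ht
    _ ≤ -K * B t ^ β := by
      have := rpow_le_rpow hBpos.le hlt.le (by linarith : 0 ≤ β)
      nlinarith

/-- Differential-inequality comparison: left derivative ≤ -K g^β implies polynomial decay. -/
theorem stmt_10 (β K T : ℝ) (hβ : 1 < β) (hK : 0 < K) (hT : 0 < T)
    (g g' : ℝ → ℝ)
    (hcont : ContinuousOn g (Icc 0 T))
    (hnonneg : ∀ t ∈ Icc (0:ℝ) T, 0 ≤ g t)
    (hg0 : 0 < g 0)
    (hderiv : ∀ t ∈ Ioc (0:ℝ) T, HasDerivWithinAt g (g' t) (Iic t) t)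
    (hdissip : ∀ t ∈ Ioc (0:ℝ) T, g' t ≤ -K * g t ^ β) :
    ∀ t ∈ Icc (0:ℝ) T,
      g t ≤ (g 0 ^ (-(β - 1)) + K * (β - 1) * t) ^ (-(1 / (β - 1))) :=
  stmt_10_general β K T hβ hK g g' hcont hg0 hderiv hdissip
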